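/- Let Γ be an n-dimensional crystallographic group with translation subgroup T and point group Π. The transfer homomorphism tr : Γ → T is given by tr(b+B) = (Σ_{A∈Π} A)(b) + I. -/
import Mathlib


noncomputable section

/-- Euclidean `n`-space. -/
abbrev E (n : ℕ) := EuclideanSpace ℝ (Fin n)

/-- An isometry `a + A` of `E n`, acting by `x ↦ a + A x`, with `A` a linear isometry
(an element of `O(n)`). -/
@[ext] structure Iso (n : ℕ) where
  a : E n
  A : E n ≃ₗᵢ[ℝ] E n

namespace Iso

variable {n : ℕ}

instance : Mul (Iso n) := ⟨fun x y => ⟨x.a + x.A y.a, y.A.trans x.A⟩⟩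
instance : One (Iso n) := ⟨⟨0, LinearIsometryEquiv.refl ℝ (E n)⟩⟩
instance : Inv (Iso n) := ⟨fun x => ⟨-(x.A.symm x.a), x.A.symm⟩⟩

@[simp] lemma mul_a (x y : Iso n) : (x * y).a = x.a + x.A y.a := rfl
@[simp] lemma mul_A (x y : Iso n) : (x * y).A = y.A.trans x.A := rfl
@[simp] lemma one_a : (1 : Iso n).a = 0 := rfl
@[simp] lemma one_A : (1 : Iso n).A = LinearIsometryEquiv.refl ℝ (E n) := rfl
@[simp] lemma inv_a (x : Iso n) : (x⁻¹).a = -(x.A.symm x.a) := rfl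
@[simp] lemma inv_A (x : Iso n) : (x⁻¹).A = x.A.symm := rfl

/-- The group of isometries of `E n`, with composition as multiplication. -/
instance : Group (Iso n) where
  mul_assoc x y z := by
    refine Iso.ext ?_ ?_
    · simp [add_assoc]
    · ext v; simp
  one_mul x := by refine Iso.ext ?_ ?_ <;> simp
  mul_one x := by refine Iso.ext ?_ ?_ <;> simp
  inv_mul_cancel x := by
    refine Iso.ext ?_ ?_
    · simp
    · ext v; simp

/-- The action of the isometry `a + A` on a point `x` of `E n`: `x ↦ a + A x`. -/
def act (g : Iso n) (x : E n) : E n := g.a + g.A x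

/-- The translation `a + I`. -/
def trans (a : E n) : Iso n := ⟨a, LinearIsometryEquiv.refl ℝ (E n)⟩

/-- `g` is a translation if its linear part is the identity. -/
def IsTranslation (g : Iso n) : Prop := g.A = LinearIsometryEquiv.refl ℝ (E n)

/-- The subgroup of all translations of `E n`. -/
def translations (n : ℕ) : Subgroup (Iso n) where
  carrier := {g | g.IsTranslation}
  mul_mem' := by
    intro x y hx hy
    simp only [Set.mem_setOf_eq, IsTranslation] at *
    rw [mul_A, hx, hy]; simp
  one_mem' := rfl
  inv_mem' := by
    intro x hx
    simp only [Set.mem_setOf_eq, IsTranslation] at *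
    rw [inv_A, hx]; rfl

/-- The set of translation vectors of a set `S` of isometries:
`{a : E n | a + I ∈ S}`. -/
def transVecs (S : Set (Iso n)) : Set (E n) := {a | Iso.trans a ∈ S}

/-- `Span(S)`: the real linear span of the translation vectors of `S`. -/
def spanS (S : Set (Iso n)) : Submodule ℝ (E n) :=
  Submodule.span ℝ (transVecs S)

/-- A crystallographic (space) group: a group of isometries of `E n` that acts
properly discontinuously (equivalently, is discrete) and cocompactly. -/
def IsCrystallographic (Γ : Subgroup (Iso n)) : Prop :=
  (∀ K : Set (E n), IsCompact K →
      {g : Iso n | g ∈ Γ ∧ ((Iso.act g '' K) ∩ K).Nonempty}.Finite) ∧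
  ∃ K : Set (E n), IsCompact K ∧ ∀ x : E n, ∃ g ∈ Γ, g.act x ∈ K

/-- `N` is a normal subgroup of `Γ`. -/
def IsNormalIn (N Γ : Subgroup (Iso n)) : Prop :=
  N ≤ Γ ∧ ∀ g ∈ Γ, ∀ x ∈ N, g * x * g⁻¹ ∈ N

/-- The completion of `S` in `Γ`:
`S̄ = {b+B ∈ Γ : b ∈ Span(S) and Span(S)ᗮ ⊆ Fix(B)}`. -/
def completion (Γ : Subgroup (Iso n)) (S : Set (Iso n)) : Set (Iso n) :=
  {g | g ∈ Γ ∧ g.a ∈ spanS S ∧ ∀ x ∈ (spanS S)ᗮ, g.A x = x}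

end Iso

/-- Let `Γ` be a crystallographic group with translation subgroup `T`
and point group `P` (given as the finite set of linear parts of elements of `Γ`), and
let `rep` be a choice of coset representatives of `T` in `Γ`, one for each element of
the point group. The transfer homomorphism `tr : Γ → T` is given on `g = b+B` by the
product of the translations `(rep A) g (rep A')⁻¹` over `A ∈ P` (where `A' = A ∘ B` is
determined by the condition that this factor lies in `T`); since these factors are
commuting translations, `tr(g)` is the translation by the sum of their vectors, and this
equals `(Σ_{A ∈ P} A)(b) + I`. -/
theorem stmt13 {n : ℕ} (Γ : Subgroup (Iso n)) (hΓ : Iso.IsCrystallographic Γ)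
    (P : Finset (E n ≃ₗᵢ[ℝ] E n))
    (hP : ∀ A : E n ≃ₗᵢ[ℝ] E n, A ∈ P ↔ ∃ a : E n, (⟨a, A⟩ : Iso n) ∈ Γ)
    (rep : (E n ≃ₗᵢ[ℝ] E n) → Iso n)
    (hrep : ∀ A ∈ P, rep A ∈ Γ ∧ (rep A).A = A)
    (g : Iso n) (hg : g ∈ Γ) :
    (∀ A ∈ P, (rep A * g * (rep (g.A.trans A))⁻¹).IsTranslation) ∧
    (∑ A ∈ P, (rep A * g * (rep (g.A.trans A))⁻¹).a) = ∑ A ∈ P, A g.a := by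
  have key : ∀ A ∈ P, g.A.trans A ∈ P := by
    intro A hA
    have hA2 : (rep A * g).A = g.A.trans A := by
      rw [Iso.mul_A, (hrep A hA).2]
    rw [hP]
    refine ⟨(rep A * g).a, ?_⟩
    rw [← hA2]
    exact Γ.mul_mem (hrep A hA).1 hg
  have ha : ∀ A ∈ P, (rep A * g * (rep (g.A.trans A))⁻¹).a
      = A g.a + ((rep A).a - (rep (g.A.trans A)).a) := by
    intro A hA
    have h1 := (hrep A hA).2
    have h2 := (hrep _ (key A hA)).2
    simp [h1, h2]
    abel
  constructor
  · intro A hA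
    have h1 := (hrep A hA).2
    have h2 := (hrep _ (key A hA)).2
    unfold Iso.IsTranslation
    simp [h1, h2]
    ext v
    simp
  · rw [Finset.sum_congr rfl ha, Finset.sum_add_distrib, Finset.sum_sub_distrib]
    have : ∑ A ∈ P, (rep (g.A.trans A)).a = ∑ A ∈ P, (rep A).a := by
      refine Finset.sum_nbij' (fun A => g.A.trans A) (fun C => g.A.symm.trans C)
        key ?_ ?_ ?_ ?_
      · intro C hC
        have h2 : (⟨(rep C * g⁻¹).a, g.A.symm.trans C⟩ : Iso n) ∈ Γ := by
          have hA2 : (rep C * g⁻¹).A = g.A.symm.trans C := by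
            rw [Iso.mul_A, (hrep C hC).2, Iso.inv_A]
          rw [← hA2]
          exact Γ.mul_mem (hrep C hC).1 (Γ.inv_mem hg)
        rw [hP]; exact ⟨_, h2⟩
      · intro A hA; ext v; simp
      · intro C hC; ext v; simp
      · intro A hA; rfl
    rw [this]
    abel
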